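/- Let A = U Σ Vᵀ where U is a real n × c matrix with orthonormal columns (UᵀU = I), V is a real c × c matrix with orthonormal columns (VᵀV = I), and Σ is a c × c diagonal matrix with non-negative diagonal entries. Then U Vᵀ is a subgradient of the trace norm at A: for every real n × c matrix B, ‖B‖_* ≥ ‖A‖_* + tr((B − A)ᵀ (U Vᵀ)). -/

import Mathlib

open Matrix

open scoped MatrixOrder in
/-- The trace norm (nuclear norm) of a real matrix `A`: the trace of the
positive semidefinite square root of `Aᵀ * A`. -/
noncomputable def traceNorm {m n : Type*} [Fintype m] [Fintype n] [DecidableEq n]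
    (A : Matrix m n ℝ) : ℝ :=
  (CFC.sqrt (Aᴴ * A)).trace

lemma cs_aux {ι : Type*} [Fintype ι] (x y : ι → ℝ) :
    ∑ j, x j * y j ≤ Real.sqrt (∑ j, x j ^ 2) * Real.sqrt (∑ j, y j ^ 2) := by
  calc ∑ j, x j * y j ≤ |∑ j, x j * y j| := le_abs_self _
    _ = Real.sqrt ((∑ j, x j * y j) ^ 2) := (Real.sqrt_sq_eq_abs _).symm
    _ ≤ Real.sqrt ((∑ j, x j ^ 2) * ∑ j, y j ^ 2) :=
        Real.sqrt_le_sqrt (Finset.sum_mul_sq_le_sq_mul_sq _ x y)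
    _ = _ := Real.sqrt_mul (Finset.sum_nonneg fun _ _ => sq_nonneg _) _

lemma trace_mul_le_traceNorm {n c : Type*} [Fintype n] [Fintype c] [DecidableEq c]
    (B G : Matrix n c ℝ) (hG : Gᵀ * G = 1) :
    Matrix.trace (Bᵀ * G) ≤ traceNorm B := by
  have hM : (Bᴴ * B).PosSemidef := Matrix.posSemidef_conjTranspose_mul_self B
  have h1 : (Bᴴ * B).IsHermitian := hM.1
  set W : Matrix c c ℝ := (h1.eigenvectorUnitary : Matrix c c ℝ) with hWdef
  set μ : c → ℝ := h1.eigenvalues with hμdef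
  have hμnn : ∀ i, 0 ≤ μ i := fun i => hM.eigenvalues_nonneg i
  have hWW : W * star W = 1 := by
    rw [hWdef]; exact Matrix.mem_unitaryGroup_iff.mp h1.eigenvectorUnitary.2
  have hWs : star W * W = 1 := mul_eq_one_comm.mp hWW
  have hWt : star W = Wᵀ := by
    rw [Matrix.star_eq_conjTranspose, Matrix.conjTranspose_eq_transpose_of_trivial]
  have hBH : Bᴴ = Bᵀ := Matrix.conjTranspose_eq_transpose_of_trivial B
  have hWW' : W * Wᵀ = 1 := by rw [← hWt]; exact hWW
  have hWs' : Wᵀ * W = 1 := by rw [← hWt]; exact hWs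
  have hWc : ∀ X : Matrix c c ℝ, Wᵀ * (W * X) = X := fun X => by
    rw [← Matrix.mul_assoc, hWs', Matrix.one_mul]
  have hWWc : ∀ X : Matrix c c ℝ, W * (Wᵀ * X) = X := fun X => by
    rw [← Matrix.mul_assoc, hWW', Matrix.one_mul]
  have hofReal : (RCLike.ofReal ∘ μ : c → ℝ) = μ := by funext i; simp
  have hspec : Wᵀ * (Bᵀ * B) * W = diagonal μ := by
    have h : star (h1.eigenvectorUnitary : Matrix c c ℝ) * (Bᴴ * B) *
        (h1.eigenvectorUnitary : Matrix c c ℝ) = diagonal (RCLike.ofReal ∘ h1.eigenvalues) := by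
      have h0 := h1.spectral_theorem
      rw [Unitary.conjStarAlgAut_apply, ← hWdef, ← hμdef] at h0
      rw [← hWdef, ← hμdef]
      conv_lhs => rw [h0]
      simp only [Matrix.mul_assoc, hWs, Matrix.mul_one]
      rw [← Matrix.mul_assoc, hWs, Matrix.one_mul]
    rw [← hWdef, ← hμdef] at h
    rw [← hBH, ← hWt, ← hofReal]
    exact h
  -- the square root of `Bᵀ * B`
  set Q : Matrix c c ℝ := W * diagonal (Real.sqrt ∘ μ) * Wᵀ with hQdef
  have hQpsd : Q.PosSemidef := by
    have hD : (diagonal (Real.sqrt ∘ μ)).PosSemidef :=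
      Matrix.posSemidef_diagonal_iff.mpr fun i => Real.sqrt_nonneg _
    have := hD.mul_mul_conjTranspose_same W
    rwa [Matrix.conjTranspose_eq_transpose_of_trivial] at this
  have hBB : Bᵀ * B = W * diagonal μ * Wᵀ := by
    rw [← hspec]
    simp only [Matrix.mul_assoc]
    rw [hWW', Matrix.mul_one, hWWc]
  have hDD : diagonal (Real.sqrt ∘ μ) * diagonal (Real.sqrt ∘ μ) = diagonal μ := by
    rw [Matrix.diagonal_mul_diagonal]
    exact congrArg diagonal (funext fun i => Real.mul_self_sqrt (hμnn i))
  have hQsq : Q ^ 2 = Bᴴ * B := by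
    rw [hBH, hBB, pow_two, hQdef]
    simp only [Matrix.mul_assoc]
    rw [hWc, ← Matrix.mul_assoc (diagonal (Real.sqrt ∘ μ)) (diagonal (Real.sqrt ∘ μ)) Wᵀ, hDD]
  open scoped MatrixOrder in
  have hsqrtQ : Q = CFC.sqrt (Bᴴ * B) := by
    exact (CFC.sqrt_unique (a := Bᴴ * B) (b := Q) (by rw [← pow_two]; exact hQsq) hQpsd.nonneg).symm
  have hTN : traceNorm B = ∑ i, Real.sqrt (μ i) := by
    have h2 : traceNorm B = Q.trace := congrArg Matrix.trace hsqrtQ.symm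
    rw [h2, hQdef, Matrix.trace_mul_cycle, hWs', one_mul, Matrix.trace_diagonal]
    simp
  -- rewrite the trace as a double sum over conjugated matrices
  have htr : Matrix.trace (Bᵀ * G) = ∑ i, ∑ j, (B * W) j i * (G * W) j i := by
    have h2 : (B * W)ᵀ * (G * W) = Wᵀ * (Bᵀ * G) * W := by
      simp only [Matrix.transpose_mul, Matrix.mul_assoc]
    have h3 : Matrix.trace (Bᵀ * G) = Matrix.trace ((B * W)ᵀ * (G * W)) := by
      rw [h2, Matrix.trace_mul_cycle, hWW', Matrix.one_mul]
    rw [h3]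
    simp [Matrix.trace, Matrix.mul_apply, Matrix.diag, Matrix.transpose_apply, mul_comm]
  rw [htr, hTN]
  apply Finset.sum_le_sum
  intro i _
  have hB2 : ∑ j, (B * W) j i ^ 2 = μ i := by
    have h4 : (B * W)ᵀ * (B * W) = diagonal μ := by
      rw [← hspec]; simp only [Matrix.transpose_mul, Matrix.mul_assoc]
    have h5 : ((B * W)ᵀ * (B * W)) i i = (diagonal μ) i i := by rw [h4]
    simpa [Matrix.mul_apply, pow_two, Matrix.diagonal_apply_eq, mul_comm] using h5
  have hG2 : ∑ j, (G * W) j i ^ 2 = 1 := by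
    have h4 : (G * W)ᵀ * (G * W) = 1 := by
      simp only [Matrix.transpose_mul, Matrix.mul_assoc]
      rw [← Matrix.mul_assoc Gᵀ G W, hG, Matrix.one_mul, hWs']
    have h5 : ((G * W)ᵀ * (G * W)) i i = (1 : Matrix c c ℝ) i i := by rw [h4]
    simpa [Matrix.mul_apply, pow_two, Matrix.one_apply_eq, mul_comm] using h5
  calc ∑ j, (B * W) j i * (G * W) j i
      ≤ Real.sqrt (∑ j, (B * W) j i ^ 2) * Real.sqrt (∑ j, (G * W) j i ^ 2) := cs_aux _ _
    _ = Real.sqrt (μ i) := by rw [hB2, hG2, Real.sqrt_one, mul_one]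

/-- If `A = U * S * Vᵀ` with `U`, `V` having orthonormal columns and `S`
diagonal with non-negative diagonal entries, then `U * Vᵀ` is a subgradient of
the trace norm at `A`. -/
theorem UVt_subgradient_traceNorm {n c : Type*} [Fintype n] [Fintype c]
    [DecidableEq c] (A : Matrix n c ℝ) (U : Matrix n c ℝ) (S V : Matrix c c ℝ)
    (hA : A = U * S * Vᵀ)
    (hU : Uᵀ * U = 1)
    (hV : Vᵀ * V = 1)
    (hS : S.IsDiag) (hSnn : ∀ i, 0 ≤ S i i) :
    ∀ B : Matrix n c ℝ,
      traceNorm B ≥ traceNorm A + Matrix.trace ((B - A)ᵀ * (U * Vᵀ)) := by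
  intro B
  have hVV : V * Vᵀ = 1 := mul_eq_one_comm.mp hV
  set d : c → ℝ := S.diag with hd
  have hSd : S = diagonal d := hS.diagonal_diag.symm
  have hUc : ∀ X : Matrix c c ℝ, Uᵀ * (U * X) = X := fun X => by
    rw [← Matrix.mul_assoc, hU, Matrix.one_mul]
  have hVc : ∀ X : Matrix c c ℝ, Vᵀ * (V * X) = X := fun X => by
    rw [← Matrix.mul_assoc, hV, Matrix.one_mul]
  have hGG : (U * Vᵀ)ᵀ * (U * Vᵀ) = 1 := by
    simp only [Matrix.transpose_mul, Matrix.transpose_transpose, Matrix.mul_assoc]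
    rw [hUc]; exact hVV
  have hAt : Aᵀ = V * diagonal d * Uᵀ := by
    rw [hA, hSd]
    simp only [Matrix.transpose_mul, Matrix.diagonal_transpose, Matrix.transpose_transpose,
      Matrix.mul_assoc]
  have hAG : Matrix.trace (Aᵀ * (U * Vᵀ)) = ∑ i, d i := by
    rw [hAt]
    simp only [Matrix.mul_assoc]
    rw [hUc, ← Matrix.mul_assoc, Matrix.trace_mul_cycle, hV, Matrix.one_mul,
      Matrix.trace_diagonal]
  have hP : (V * diagonal d * Vᵀ).PosSemidef := by
    have hD : (diagonal d).PosSemidef := Matrix.posSemidef_diagonal_iff.mpr fun i => by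
      simpa [hd] using hSnn i
    have h2 := hD.mul_mul_conjTranspose_same V
    rwa [Matrix.conjTranspose_eq_transpose_of_trivial] at h2
  have hsq : (V * diagonal d * Vᵀ) ^ 2 = Aᴴ * A := by
    rw [Matrix.conjTranspose_eq_transpose_of_trivial, hAt, hA, hSd, pow_two]
    simp only [Matrix.mul_assoc]
    rw [hVc, hUc]
  have hTA : traceNorm A = ∑ i, d i := by
    open scoped MatrixOrder in
    have h2 : V * diagonal d * Vᵀ = CFC.sqrt (Aᴴ * A) := by
      exact (CFC.sqrt_unique (a := Aᴴ * A) (b := V * diagonal d * Vᵀ) (by rw [← pow_two]; exact hsq) hP.nonneg).symm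
    have h3 : traceNorm A = (V * diagonal d * Vᵀ).trace := congrArg Matrix.trace h2.symm
    rw [h3, Matrix.trace_mul_cycle, hV, Matrix.one_mul, Matrix.trace_diagonal]
  have hsplit : Matrix.trace ((B - A)ᵀ * (U * Vᵀ))
      = Matrix.trace (Bᵀ * (U * Vᵀ)) - Matrix.trace (Aᵀ * (U * Vᵀ)) := by
    rw [Matrix.transpose_sub, Matrix.sub_mul, Matrix.trace_sub]
  rw [ge_iff_le, hsplit, hAG, hTA]
  have hkey := trace_mul_le_traceNorm B (U * Vᵀ) hGG
  linarith
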